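/- Let p be a prime, let H be a subgroup of F_p^×, and let χ : H → ℂ^× be a nontrivial character. If f : F_p → ℂ is χ-symmetric and f is not identically zero, then |supp(f)| + |supp(f̂)| ≥ p + |H| − 1. -/

import Mathlib

/-!
The support of a `χ`-symmetric `f` is stable under multiplication by `H`, and `f 0 = 0` because `χ`
is nontrivial, so `H` acts freely on the support and `|H|` divides `|supp f|`. The Fourier
transform of `f` is `χ⁻¹`-symmetric, so `|H|` divides `|supp f̂|` as well. Tao's uncertainty
principle `|supp f| + |supp f̂| ≥ p + 1`, which rests on Chebotarev's theorem that every minor of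
the Fourier matrix `(ω ^ (a b))` is nonzero, shows that this sum exceeds `p - 1`; since both are
multiples of `|H|`, it exceeds `p - 1` by at least `|H|`.
-/

open Finset Function

namespace Polynomial

variable {R : Type*} [CommRing R]

theorem exists_X_pow_sub_X_pow_eq (a b : ℕ) :
    ∃ g : R[X], X ^ b - X ^ a = (X - 1) * g ∧ g.eval 1 = b - a :=
  ⟨∑ t ∈ range b, X ^ t - ∑ t ∈ range a, X ^ t, by
    rw [mul_sub, mul_geom_sum, mul_geom_sum]; ring, by simp [eval_finsetSum]⟩

theorem exists_prod_X_pow_sub_X_pow_eq {n : ℕ} (e : Fin n → ℕ) :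
    ∃ g : R[X], ∏ i : Fin n, ∏ j ∈ Ioi i, (X ^ e j - X ^ e i) =
      (X - 1) ^ (∑ i : Fin n, #(Ioi i)) * g ∧
      g.eval 1 = ∏ i : Fin n, ∏ j ∈ Ioi i, ((e j : R) - e i) := by
  choose g hg hg1 using exists_X_pow_sub_X_pow_eq (R := R)
  refine ⟨∏ i : Fin n, ∏ j ∈ Ioi i, g (e i) (e j), ?_, by simp [eval_prod, hg1]⟩
  simp only [hg, prod_mul_distrib, prod_const, prod_pow_eq_pow_sum]

end Polynomial

namespace MvPolynomial

variable {σ R : Type*} [CommRing R]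

theorem X_sub_X_dvd_of_aeval_update_eq_zero [DecidableEq σ] {i j : σ} {f : MvPolynomial σ R}
    (hf : aeval (Function.update X i (X j) : σ → MvPolynomial σ R) f = 0) : X i - X j ∣ f := by
  set I := Ideal.span {(X i - X j : MvPolynomial σ R)}
  have hmk : (Ideal.Quotient.mkₐ R I).comp (aeval (Function.update X i (X j))) =
      Ideal.Quotient.mkₐ R I := by
    refine algHom_ext fun k => ?_
    obtain rfl | hk := eq_or_ne k i
    · simp only [AlgHom.comp_apply, aeval_X, Function.update_self, Ideal.Quotient.mkₐ_eq_mk,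
        Ideal.Quotient.eq, ← neg_sub (X k), I.neg_mem_iff]
      exact Ideal.mem_span_singleton_self _
    · simp [hk]
  rw [← Ideal.mem_span_singleton, ← Ideal.Quotient.eq_zero_iff_mem, ← Ideal.Quotient.mkₐ_eq_mk R,
    ← hmk, AlgHom.comp_apply, hf, map_zero]

theorem irreducible_X_sub_X [IsDomain R] {i j : σ} (h : i ≠ j) :
    Irreducible (X i - X j : MvPolynomial σ R) := by
  classical
  have hcoeff : coeff (Finsupp.single i 1) (X i - X j : MvPolynomial σ R) = 1 := by
    simp [coeff_X, h.symm, Finsupp.single_left_inj]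
  apply irreducible_of_totalDegree_eq_one
  · refine le_antisymm ((totalDegree_sub _ _).trans (by simp)) ?_
    have := le_totalDegree (p := (X i - X j : MvPolynomial σ R)) (s := Finsupp.single i 1)
      (by simp [hcoeff])
    rwa [Finsupp.sum_single_index rfl] at this
  · exact fun r hr => isUnit_of_dvd_one (hcoeff ▸ hr _)

theorem eq_or_eq_of_X_sub_X_dvd [Nontrivial R] {i j k l : σ} (hkl : k ≠ l)
    (h : (X i - X j : MvPolynomial σ R) ∣ X k - X l) : k = i ∨ k = j := by
  classical
  by_contra! hk
  have := map_dvd (eval (Pi.single k 1)) h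
  simp [hk.1.symm, hk.2.symm, hkl.symm] at this

theorem det_vandermonde_X_dvd [IsDomain R] [UniqueFactorizationMonoid R] {n : ℕ}
    (e : Fin n → ℕ) :
    (Matrix.vandermonde (X : Fin n → MvPolynomial (Fin n) R)).det ∣
      (Matrix.of fun i j => X i ^ e j).det := by
  classical
  rw [Matrix.det_vandermonde, prod_sigma']
  refine prod_dvd_of_isRelPrime ?_ ?_
  · rintro ⟨i, j⟩ hij ⟨k, l⟩ hkl hne
    simp only [coe_sigma, Set.mem_sigma_iff, mem_coe, mem_univ, coe_Ioi, Set.mem_Ioi,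
      true_and] at hij hkl
    refine (irreducible_X_sub_X hij.ne').isRelPrime_iff_not_dvd.mpr fun hdvd => hne ?_
    have hl := eq_or_eq_of_X_sub_X_dvd hkl.ne' hdvd
    have hk := eq_or_eq_of_X_sub_X_dvd hkl.ne (dvd_neg.mpr hdvd |>.trans (neg_sub _ _).dvd)
    obtain ⟨rfl, rfl⟩ : k = i ∧ l = j := by
      simp only [Fin.ext_iff, Fin.lt_def] at hk hl hij hkl ⊢
      omega
    rfl
  · rintro ⟨i, j⟩ hij
    simp only [mem_sigma, mem_univ, mem_Ioi, true_and] at hij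
    refine X_sub_X_dvd_of_aeval_update_eq_zero ?_
    rw [AlgHom.map_det]
    refine Matrix.det_zero_of_row_eq hij.ne' ?_
    ext c
    simp [hij.ne]

theorem eval_one_aeval_X_pow (γ : σ → ℕ) (Q : MvPolynomial σ R) :
    Polynomial.eval 1 (aeval (fun i => (Polynomial.X : Polynomial R) ^ γ i) Q) = eval 1 Q := by
  rw [← Polynomial.coe_aeval_eq_eval, ← AlgHom.comp_apply, comp_aeval, ← coe_aeval_eq_eval]
  simp [Pi.one_def]

theorem prod_sub_eq_mul_eval_one [IsDomain R] {n : ℕ} (e : Fin n → ℕ)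
    {Q : MvPolynomial (Fin n) R}
    (hQ : (Matrix.of fun i j => X i ^ e j).det = (Matrix.vandermonde X).det * Q) :
    ∏ i : Fin n, ∏ j ∈ Ioi i, ((e j : R) - e i) =
      (∏ i : Fin n, ∏ j ∈ Ioi i, (((j : ℕ) : R) - (i : ℕ))) * eval 1 Q := by
  -- After `X i ↦ X ^ i` every factor `X ^ b - X ^ a` on both sides is divisible by `X - 1`;
  -- cancelling these factors before evaluating at `1` turns each into `b - a`.
  set φ := aeval (R := R) fun i : Fin n => (Polynomial.X : Polynomial R) ^ (i : ℕ)
  have hD : φ (Matrix.of fun i j => X i ^ e j).det =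
      ∏ i : Fin n, ∏ j ∈ Ioi i, (Polynomial.X ^ e j - Polynomial.X ^ e i) := by
    rw [AlgHom.map_det, ← Matrix.det_vandermonde, ← Matrix.det_transpose]
    congr 1
    ext i j
    simp [φ, ← pow_mul, mul_comm]
  have hV : φ (Matrix.vandermonde X).det =
      ∏ i : Fin n, ∏ j ∈ Ioi i, (Polynomial.X ^ (j : ℕ) - Polynomial.X ^ (i : ℕ)) := by
    simp [Matrix.det_vandermonde, φ]
  obtain ⟨g, hg, hg1⟩ := Polynomial.exists_prod_X_pow_sub_X_pow_eq (R := R) e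
  obtain ⟨g₀, hg₀, hg₀1⟩ := Polynomial.exists_prod_X_pow_sub_X_pow_eq (R := R) (fun i => (i : ℕ))
  have hφQ := congrArg φ hQ
  rw [hD, map_mul, hV, hg, hg₀, mul_assoc] at hφQ
  have hX : (Polynomial.X - 1 : Polynomial R) ≠ 0 := by
    simpa using Polynomial.X_sub_C_ne_zero (1 : R)
  have := congrArg (Polynomial.eval 1) (mul_left_cancel₀ (pow_ne_zero _ hX) hφQ)
  rwa [Polynomial.eval_mul, hg1, hg₀1, eval_one_aeval_X_pow] at this

end MvPolynomial

namespace IsPrimitiveRoot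

open MvPolynomial

theorem pow_val_mul {M : Type*} [CommMonoid M] {n : ℕ} {ζ : M} (hζ : IsPrimitiveRoot ζ n)
    (a b : ZMod n) : ζ ^ (a * b).val = (ζ ^ a.val) ^ b.val := by
  have h := pow_mod_orderOf ζ (a.val * b.val)
  rw [← hζ.eq_orderOf] at h
  rw [← pow_mul, ZMod.val_mul, h]

variable {K : Type*} [Field K] [CharZero K] {p : ℕ} [Fact p.Prime] {ω : K}

theorem dvd_eval_one_of_aeval_pow_eq_zero (hω : IsPrimitiveRoot ω p) {σ : Type*} (γ : σ → ℕ)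
    {Q : MvPolynomial σ ℤ} (hQ : aeval (fun i => ω ^ γ i) Q = 0) : (p : ℤ) ∣ eval 1 Q := by
  have hp := (Fact.out : p.Prime).pos
  set q := aeval (fun i => (Polynomial.X : Polynomial ℤ) ^ γ i) Q with hq_def
  have hq : Polynomial.aeval ω q = 0 := by
    rw [← hQ, hq_def, ← AlgHom.comp_apply, comp_aeval]
    simp
  obtain ⟨r, hr⟩ : Polynomial.cyclotomic p ℤ ∣ q := by
    rw [Polynomial.cyclotomic_eq_minpoly hω hp]
    exact minpoly.isIntegrallyClosed_dvd (hω.isIntegral hp) hq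
  rw [← eval_one_aeval_X_pow γ, ← hq_def, hr, Polynomial.eval_mul,
    Polynomial.eval_one_cyclotomic_prime]
  exact dvd_mul_right _ _

/-- Chebotarev's theorem. The quotient `Q` of the alternant `det (X i ^ e j)` by the Vandermonde
determinant vanishes at `(ω ^ a i)`, so `p ∣ Q(1, …, 1)`; but `Q(1, …, 1) * ∏ (j - i)` is
`∏ (e j - e i)`, which is prime to `p`. -/
theorem det_pow_val_mul_ne_zero (hω : IsPrimitiveRoot ω p) {n : ℕ} {a b : Fin n → ZMod p}
    (ha : Injective a) (hb : Injective b) :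
    (Matrix.of fun i j => ω ^ (a i * b j).val).det ≠ 0 := by
  obtain ⟨Q, hQ⟩ := det_vandermonde_X_dvd (R := ℤ) fun j => (b j).val
  set ψ := aeval (R := ℤ) fun i => ω ^ (a i).val
  have hD : ψ (Matrix.of fun i j => X i ^ (b j).val).det =
      (Matrix.of fun i j => ω ^ (a i * b j).val).det := by
    rw [AlgHom.map_det]
    congr 1
    ext i j
    simp [ψ, hω.pow_val_mul]
  have hV : ψ (Matrix.vandermonde X).det ≠ 0 := by
    have hmap : ψ.mapMatrix (Matrix.vandermonde X) =
        Matrix.vandermonde fun i => ω ^ (a i).val := by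
      ext i j
      simp [ψ]
    rw [AlgHom.map_det, hmap, Matrix.det_vandermonde_ne_zero_iff]
    exact fun i j h => ha (ZMod.val_injective p (hω.pow_inj (ZMod.val_lt _) (ZMod.val_lt _) h))
  intro h
  rw [← hD, hQ, map_mul, mul_eq_zero, or_iff_right hV] at h
  have hdvd : (p : ℤ) ∣ ∏ i : Fin n, ∏ j ∈ Ioi i, (((b j).val : ℤ) - (b i).val) := by
    rw [prod_sub_eq_mul_eval_one _ hQ]
    exact (hω.dvd_eval_one_of_aeval_pow_eq_zero _ h).mul_left _
  rw [← ZMod.intCast_zmod_eq_zero_iff_dvd] at hdvd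
  push_cast at hdvd
  simp only [ZMod.natCast_zmod_val, prod_eq_zero_iff, mem_Ioi, sub_eq_zero] at hdvd
  obtain ⟨i, -, j, hij, hbij⟩ := hdvd
  exact hij.ne' (hb hbij)

theorem eq_zero_of_forall_sum_pow_val_mul_eq_zero (hω : IsPrimitiveRoot ω p)
    {S T : Finset (ZMod p)} (hST : #S ≤ #T) {c : ZMod p → K}
    (hc : ∀ t ∈ T, ∑ s ∈ S, ω ^ (t * s).val * c s = 0) : ∀ s ∈ S, c s = 0 := by
  obtain ⟨T', hT'T, hT'⟩ := exists_subset_card_eq hST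
  let eS : Fin #S ≃ S := S.equivFin.symm
  let eT : Fin #S ≃ T' := (T'.equivFin.trans (finCongr hT')).symm
  have hdet := hω.det_pow_val_mul_ne_zero (a := fun i => eT i) (b := fun j => eS j)
    (Subtype.val_injective.comp eT.injective) (Subtype.val_injective.comp eS.injective)
  have hv := Matrix.eq_zero_of_mulVec_eq_zero hdet (v := fun j => c (eS j)) <| funext fun i => by
    simp only [Matrix.mulVec, dotProduct, Matrix.of_apply, Pi.zero_apply]
    rw [← hc _ (hT'T (eT i).2), ← sum_coe_sort S, ← eS.sum_comp]
  intro s hs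
  simpa [eS] using congrFun hv (eS.symm ⟨s, hs⟩)

end IsPrimitiveRoot

noncomputable def fourierTransform {p : ℕ} [NeZero p] (f : ZMod p → ℂ) (a : ZMod p) : ℂ :=
  ∑ b : ZMod p, f b * Complex.exp (2 * Real.pi * Complex.I * ((a * b).val : ℕ) / p)

theorem fourierTransform_eq_sum_pow {p : ℕ} [NeZero p] (f : ZMod p → ℂ) (a : ZMod p) :
    fourierTransform f a = ∑ b, Complex.exp (2 * Real.pi * Complex.I / p) ^ (a * b).val * f b := by
  refine sum_congr rfl fun b _ => ?_
  rw [← Complex.exp_nat_mul, mul_comm]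
  ring_nf

theorem add_one_le_ncard_support_add_ncard_support_fourierTransform {p : ℕ} [Fact p.Prime]
    {f : ZMod p → ℂ} (hf : f ≠ 0) :
    p + 1 ≤ (support f).ncard + (support (fourierTransform f)).ncard := by
  classical
  have hsupp (g : ZMod p → ℂ) : (support g).ncard = #{x | g x ≠ 0} := by
    rw [← Set.ncard_coe_finset, coe_filter]
    simp [support]
  rw [hsupp, hsupp]
  by_contra! hlt
  have hω := Complex.isPrimitiveRoot_exp p (Fact.out : p.Prime).ne_zero
  obtain ⟨x, hx⟩ := Function.ne_iff.mp hf
  refine hx (hω.eq_zero_of_forall_sum_pow_val_mul_eq_zero (S := {x | f x ≠ 0})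
    (T := ({a | fourierTransform f a ≠ 0} : Finset _)ᶜ) ?_ (fun t ht => ?_) x (by simpa using hx))
  · rw [card_compl, ZMod.card]
    omega
  · rw [sum_subset (subset_univ _) fun b _ hb => by simp_all, ← fourierTransform_eq_sum_pow]
    simpa using ht

section

variable {G α : Type*} [Group G] [MulAction G α]

theorem MulAction.card_dvd_ncard_of_smul_mem {s : Set α} (hs : ∀ g : G, ∀ x ∈ s, g • x ∈ s)
    (hfree : ∀ x ∈ s, stabilizer G x = ⊥) : Nat.card G ∣ s.ncard := by
  let t : SubMulAction G α := ⟨s, fun g _ hx => hs g _ hx⟩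
  have ht : ∀ x : t, stabilizer G x = ⊥ := fun x => by
    rw [SubMulAction.stabilizer_of_subMul]
    exact hfree x x.2
  change Nat.card G ∣ Nat.card t
  rw [Nat.card_congr (selfEquivOrbitsQuotientProd (X := t) ht), Nat.card_prod]
  exact dvd_mul_left _ _

def IsChiSymmetric (χ : G →* ℂˣ) (f : α → ℂ) : Prop :=
  ∀ (g : G) (x : α), f (g • x) = χ g * f x

variable {χ : G →* ℂˣ} {f : α → ℂ}

theorem IsChiSymmetric.smul_mem_support (hf : IsChiSymmetric χ f) (g : G) {x : α}
    (hx : x ∈ support f) : g • x ∈ support f := by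
  rw [mem_support, hf]
  exact mul_ne_zero (χ g).ne_zero hx

theorem IsChiSymmetric.apply_eq_zero_of_forall_smul_eq (hf : IsChiSymmetric χ f) (hχ : χ ≠ 1)
    {x : α} (hx : ∀ g : G, g • x = x) : f x = 0 := by
  obtain ⟨g, hg⟩ : ∃ g, χ g ≠ 1 := by simpa [DFunLike.ext_iff] using hχ
  have hgx := hf g x
  rw [hx, eq_comm, mul_left_eq_self₀] at hgx
  exact hgx.resolve_left fun h => hg (Units.ext h)

end

namespace IsChiSymmetric

theorem card_dvd_ncard_support {F : Type*} [Field F] {H : Subgroup Fˣ} {χ : H →* ℂˣ}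
    {f : F → ℂ} (hf : IsChiSymmetric χ f) (hχ : χ ≠ 1) : Nat.card H ∣ (support f).ncard := by
  refine MulAction.card_dvd_ncard_of_smul_mem (fun g x => hf.smul_mem_support g) fun x hx => ?_
  have hx0 : x ≠ 0 := by
    rintro rfl
    exact hx (hf.apply_eq_zero_of_forall_smul_eq hχ fun g => smul_zero _)
  ext h
  simp [MulAction.mem_stabilizer_iff, Subgroup.smul_def, Units.smul_def, mul_eq_right₀ hx0]

theorem fourierTransform {p : ℕ} [NeZero p] {H : Subgroup (ZMod p)ˣ} {χ : H →* ℂˣ}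
    {f : ZMod p → ℂ} (hf : IsChiSymmetric χ f) : IsChiSymmetric χ⁻¹ (fourierTransform f) := by
  intro h x
  simp only [_root_.fourierTransform, mul_sum]
  rw [← Equiv.sum_comp (MulAction.toPerm h⁻¹)]
  refine sum_congr rfl fun b _ => ?_
  have hxb : h • x * h⁻¹ • b = x * b := by
    simp only [Subgroup.smul_def, Units.smul_def, smul_eq_mul, Subgroup.coe_inv]
    rw [mul_mul_mul_comm, Units.mul_inv, one_mul]
  rw [MulAction.toPerm_apply, hf, hxb, map_inv, MonoidHom.inv_apply, mul_assoc]

end IsChiSymmetric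

theorem uncertainty_chi_symmetric_nontrivial (p : ℕ) [Fact p.Prime]
    (H : Subgroup (ZMod p)ˣ) (χ : H →* ℂˣ) (hχ : χ ≠ 1)
    (f : ZMod p → ℂ) (hf : f ≠ 0)
    (hsym : ∀ (h : H) (x : ZMod p), f (((h : (ZMod p)ˣ) : ZMod p) * x) = (χ h : ℂ) * f x) :
    p + Nat.card H - 1 ≤
      (Function.support f).ncard +
      (Function.support fun a : ZMod p =>
        ∑ b : ZMod p, f b * Complex.exp (2 * Real.pi * Complex.I * ((a * b).val : ℕ) / p)).ncard := by
  have hsym : IsChiSymmetric χ f := hsym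
  have hA := hsym.card_dvd_ncard_support hχ
  have hB := hsym.fourierTransform.card_dvd_ncard_support ((inv_ne_one (α := H →* ℂˣ)).mpr hχ)
  have hAB := add_one_le_ncard_support_add_ncard_support_fourierTransform hf
  have hH : Nat.card H ∣ p - 1 := by
    rw [← ZMod.card_units p, ← Nat.card_eq_fintype_card]
    exact Subgroup.card_subgroup_dvd_card H
  have hle := Nat.le_of_dvd (by omega) (Nat.dvd_sub (Nat.dvd_add hA hB) hH)
  have hpos := Nat.card_pos (α := H)
  change _ ≤ _ + (support (fourierTransform f)).ncard
  omega
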